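/- Let g : [t₀,t₁) → ℝ be measurable and let α : [t₀,t₁) × ℝ² → (a,b) ⊂ (0,1) be continuously differentiable with bounded derivative in its second variable. Given Π with Σ_{(x,y)∈Π}|y|^{-1/b'} < ∞ for some b < b' < 1, the functions fₙ(t) = a₀ + Σ_{(x,y)∈Π, |y|≤n} 1_{(t₀,t]}(x) y^⟨−1/α(t, fₙ(x₋), g(t))⟩ form a Cauchy sequence in (D[t₀,t₁), ‖·‖_∞) whose limit f satisfies f(t) = a₀ + Σ_{(x,y)∈Π} 1_{(t₀,t]}(x) y^⟨−1/α(t, f(x₋), g(t))⟩. -/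

import Mathlib

open MeasureTheory Filter Set

noncomputable def spow (r s : ℝ) : ℝ := Real.sign r * |r| ^ s

noncomputable def wab (a b y : ℝ) : ℝ :=
  max (|y| ^ (-1 / a) * (1 + abs (Real.log (abs y)))) (|y| ^ (-1 / b) * (1 + abs (Real.log (abs y))))

noncomputable def Mconst (α : ℝ → ℝ) : ℝ := ⨆ ξ : ℝ, |deriv α ξ| / (α ξ) ^ 2

/-- Càdlàg on `[t₀,t₁)`: right-continuous on `[t₀,t₁)` and left limits exist on `(t₀,t₁]`. -/
def CadlagOn (f : ℝ → ℝ) (t₀ t₁ : ℝ) : Prop :=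
  (∀ u ∈ Set.Ico t₀ t₁, Filter.Tendsto f (nhdsWithin u (Set.Ioi u)) (nhds (f u))) ∧
  (∀ u ∈ Set.Ioc t₀ t₁, ∃ L, Filter.Tendsto f (nhdsWithin u (Set.Iio u)) (nhds L))

/-- The sum `∑_{(x,y)∈Λ} 1_{(t₀,t]}(x) y^⟨-1/α(f(x₋))⟩`. -/
noncomputable def jumpSum (α : ℝ → ℝ) (Λ : Set (ℝ × ℝ)) (t₀ t : ℝ) (f : ℝ → ℝ) : ℝ :=
  ∑' p : Λ, if (p : ℝ × ℝ).1 ∈ Set.Ioc t₀ t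
    then spow (p : ℝ × ℝ).2 (-1 / α (Function.leftLim f (p : ℝ × ℝ).1)) else 0

/-- The truncated sum over points with `|y| ≤ n`. -/
noncomputable def jumpSumTrunc (α : ℝ → ℝ) (Λ : Set (ℝ × ℝ)) (n : ℝ) (t₀ t : ℝ) (f : ℝ → ℝ) : ℝ :=
  ∑' p : Λ, if |(p : ℝ × ℝ).2| ≤ n ∧ (p : ℝ × ℝ).1 ∈ Set.Ioc t₀ t
    then spow (p : ℝ × ℝ).2 (-1 / α (Function.leftLim f (p : ℝ × ℝ).1)) else 0

/-!
Comparing two truncations `F m` and `F n` above a common level `N`: the jumps with `|y| ≤ N`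
appear in both and differ only through the index `α(t, F(x₋), g t)`; since `c ↦ y^⟨-1/c⟩` has
derivative at most `wab a b y / a²` on `[a, b]` and `α` is `K`-Lipschitz in `z`, they contribute at
most `∑ wab a b y / a² · K · |F m (x₋) - F n (x₋)|`, while the jumps with `|y| > N` contribute at
most twice the tail `∑_{|y| > N} wab a b y`. A discrete Gronwall inequality over the finitely many
jumps with `0 < |y| ≤ N` bounds `sup |F m - F n|` by `2 · tail N · exp (K ∑ wab a b y / a²)`, which
tends to `0`. The left limits of the uniform limit are the limits of those of `F n`, and dominated
convergence passes to the limit in the equation.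
-/

open Function Topology
open scoped NNReal

lemma abs_sign_le_one (r : ℝ) : |Real.sign r| ≤ 1 := by
  rcases Real.sign_apply_eq r with h | h | h <;> simp [h]

lemma abs_spow_le (y s : ℝ) : |spow y s| ≤ |y| ^ s := by
  rw [spow, abs_mul, abs_of_nonneg (Real.rpow_nonneg (abs_nonneg y) s)]
  exact mul_le_of_le_one_left (by positivity) (abs_sign_le_one y)

lemma neg_one_div_le_neg_one_div {c d : ℝ} (hc : 0 < c) (hcd : c ≤ d) : -1 / c ≤ -1 / d := by
  rw [neg_div, neg_div, neg_le_neg_iff]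
  exact one_div_le_one_div_of_le hc hcd

lemma rpow_neg_one_div_le_max {r a b c : ℝ} (hr : 0 ≤ r) (ha : 0 < a) (hc : c ∈ Icc a b) :
    r ^ (-1 / c) ≤ max (r ^ (-1 / a)) (r ^ (-1 / b)) := by
  have hc0 : 0 < c := ha.trans_le hc.1
  rcases le_total 1 r with h1 | h1
  · exact le_max_of_le_right
      (Real.rpow_le_rpow_of_exponent_le h1 (neg_one_div_le_neg_one_div hc0 hc.2))
  rcases hr.eq_or_lt with rfl | h0
  · rw [Real.zero_rpow (by simp [hc0.ne'])]
    exact le_max_of_le_left (Real.rpow_nonneg le_rfl _)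
  · exact le_max_of_le_left
      (Real.rpow_le_rpow_of_exponent_ge h0 h1 (neg_one_div_le_neg_one_div ha hc.1))

lemma wab_eq_max_mul (a b y : ℝ) :
    wab a b y = max (|y| ^ (-1 / a)) (|y| ^ (-1 / b)) * (1 + |Real.log (|y|)|) :=
  (max_mul_of_nonneg _ _ (by positivity)).symm

lemma wab_nonneg (a b y : ℝ) : 0 ≤ wab a b y :=
  le_max_of_le_left (by positivity)

lemma wab_zero {a b : ℝ} (ha : a ≠ 0) (hb : b ≠ 0) : wab a b 0 = 0 := by
  simp [wab, Real.zero_rpow (show -1 / a ≠ 0 by simp [ha]),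
    Real.zero_rpow (show -1 / b ≠ 0 by simp [hb])]

lemma abs_spow_le_wab {a b c : ℝ} (y : ℝ) (ha : 0 < a) (hc : c ∈ Icc a b) :
    |spow y (-1 / c)| ≤ wab a b y := by
  rw [wab_eq_max_mul]
  calc |spow y (-1 / c)| ≤ |y| ^ (-1 / c) := abs_spow_le y _
    _ ≤ max (|y| ^ (-1 / a)) (|y| ^ (-1 / b)) := rpow_neg_one_div_le_max (abs_nonneg y) ha hc
    _ ≤ _ := le_mul_of_one_le_right (le_max_of_le_left (by positivity)) (by simp)

lemma abs_spow_sub_spow_le {a b c₁ c₂ : ℝ} (y : ℝ) (ha : 0 < a) (hc₁ : c₁ ∈ Icc a b)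
    (hc₂ : c₂ ∈ Icc a b) :
    |spow y (-1 / c₁) - spow y (-1 / c₂)| ≤ wab a b y / a ^ 2 * |c₁ - c₂| := by
  rcases eq_or_ne y 0 with rfl | hy
  · simp only [spow, Real.sign_zero, zero_mul, sub_zero, abs_zero]
    exact mul_nonneg (div_nonneg (wab_nonneg a b 0) (sq_nonneg a)) (abs_nonneg _)
  have hy' : 0 < |y| := abs_pos.2 hy
  have hderiv : ∀ c ∈ Icc a b, HasDerivWithinAt (fun c => |y| ^ (-1 / c))
      (|y| ^ (-1 / c) * Real.log |y| * (c ^ 2)⁻¹) (Icc a b) c := by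
    intro c hc
    have hc0 : c ≠ 0 := (ha.trans_le hc.1).ne'
    have hinv : HasDerivAt (fun c : ℝ => -1 / c) (c ^ 2)⁻¹ c := by
      simpa [neg_div, one_div] using (hasDerivAt_inv hc0).fun_neg
    exact ((Real.hasStrictDerivAt_const_rpow hy' (-1 / c)).hasDerivAt.comp c hinv).hasDerivWithinAt
  have hbound : ∀ c ∈ Icc a b,
      ‖|y| ^ (-1 / c) * Real.log |y| * (c ^ 2)⁻¹‖ ≤ wab a b y / a ^ 2 := by
    intro c hc
    have hc0 : 0 < c := ha.trans_le hc.1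
    rw [wab_eq_max_mul, Real.norm_eq_abs, abs_mul, abs_mul,
      abs_of_nonneg (Real.rpow_nonneg (abs_nonneg y) _),
      abs_of_nonneg (inv_nonneg.2 (sq_nonneg c)), div_eq_mul_inv _ (a ^ 2)]
    gcongr
    · exact rpow_neg_one_div_le_max (abs_nonneg y) ha hc
    · linarith
    · exact hc.1
  have hmvt := (convex_Icc a b).norm_image_sub_le_of_norm_hasDerivWithin_le hderiv hbound hc₂ hc₁
  calc |spow y (-1 / c₁) - spow y (-1 / c₂)|
      = |Real.sign y| * |(|y| ^ (-1 / c₁) - |y| ^ (-1 / c₂))| := by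
        rw [spow, spow, ← mul_sub, abs_mul]
    _ ≤ |(|y| ^ (-1 / c₁) - |y| ^ (-1 / c₂))| :=
        mul_le_of_le_one_left (abs_nonneg _) (abs_sign_le_one y)
    _ ≤ wab a b y / a ^ 2 * |c₁ - c₂| := hmvt

lemma abs_spow_comp_sub_le {a b : ℝ} {K : ℝ≥0} {β : ℝ → ℝ} (ha : 0 < a)
    (hβ : ∀ z, β z ∈ Icc a b) (hK : LipschitzWith K β) (y z z' : ℝ) :
    |spow y (-1 / β z) - spow y (-1 / β z')| ≤ wab a b y / a ^ 2 * K * |z - z'| := by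
  have hβz : |β z - β z'| ≤ K * |z - z'| := by
    simpa only [Real.dist_eq] using hK.dist_le_mul z z'
  calc |spow y (-1 / β z) - spow y (-1 / β z')| ≤ wab a b y / a ^ 2 * |β z - β z'| :=
        abs_spow_sub_spow_le y ha (hβ z) (hβ z')
    _ ≤ wab a b y / a ^ 2 * (K * |z - z'|) := by
        gcongr
        exact div_nonneg (wab_nonneg a b y) (sq_nonneg a)
    _ = wab a b y / a ^ 2 * K * |z - z'| := by ring

section Summability

variable {ι : Type*} {y : ι → ℝ}

lemma rpow_neg_one_div_mul_one_add_log_le {r c b' : ℝ} (hr : 1 ≤ r) (hc : 0 < c) (hcb : c < b') :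
    r ^ (-1 / c) * (1 + |Real.log r|) ≤ (1 + (1 / c - 1 / b')⁻¹) * r ^ (-1 / b') := by
  set θ := 1 / c - 1 / b'
  have hθ : 0 < θ := sub_pos.2 (one_div_lt_one_div_of_lt hc hcb)
  have hr0 : 0 < r := one_pos.trans_le hr
  have hlog : 1 + |Real.log r| ≤ (1 + θ⁻¹) * r ^ θ := by
    have h1 : 1 ≤ r ^ θ := Real.one_le_rpow hr hθ.le
    have h2 : Real.log r ≤ θ⁻¹ * r ^ θ := by
      rw [inv_mul_eq_div]; exact Real.log_le_rpow_div hr0.le hθ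
    rw [abs_of_nonneg (Real.log_nonneg hr)]
    nlinarith [inv_pos.2 hθ]
  calc r ^ (-1 / c) * (1 + |Real.log r|) ≤ r ^ (-1 / c) * ((1 + θ⁻¹) * r ^ θ) := by gcongr
    _ = (1 + θ⁻¹) * r ^ (-1 / c + θ) := by rw [Real.rpow_add hr0]; ring
    _ = (1 + θ⁻¹) * r ^ (-1 / b') := by congr 2; ring

lemma summable_rpow_neg_one_div_mul_one_add_log {c b' : ℝ} (hc : 0 < c) (hcb : c < b')
    (hy : Summable fun i => |y i| ^ (-1 / b')) :
    Summable fun i => |y i| ^ (-1 / c) * (1 + |Real.log (|y i|)|) := by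
  refine (hy.mul_left (1 + (1 / c - 1 / b')⁻¹)).of_norm_bounded_eventually ?_
  filter_upwards [hy.tendsto_cofinite_zero.eventually (gt_mem_nhds one_pos)] with i hi
  rw [Real.norm_of_nonneg (by positivity)]
  rcases eq_or_ne (y i) 0 with h0 | h0
  · simp [h0, Real.zero_rpow (show -1 / c ≠ 0 by simp [hc.ne']),
      Real.zero_rpow (show -1 / b' ≠ 0 by simp [(hc.trans hcb).ne'])]
  refine rpow_neg_one_div_mul_one_add_log_le (not_lt.1 fun h => hi.not_ge ?_) hc hcb
  exact Real.one_le_rpow_of_pos_of_le_one_of_nonpos (abs_pos.2 h0) h.le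
    (div_nonpos_of_nonpos_of_nonneg (by norm_num) (hc.trans hcb).le)

lemma summable_wab {a b b' : ℝ} (ha : 0 < a) (hb : 0 < b) (hab' : a < b') (hbb' : b < b')
    (hy : Summable fun i => |y i| ^ (-1 / b')) : Summable fun i => wab a b (y i) :=
  ((summable_rpow_neg_one_div_mul_one_add_log ha hab' hy).add
    (summable_rpow_neg_one_div_mul_one_add_log hb hbb' hy)).of_nonneg_of_le
    (fun i => wab_nonneg a b (y i)) fun i => max_le_add_of_nonneg (by positivity) (by positivity)

lemma finite_setOf_ne_zero_abs_le {a b : ℝ} (ha : 0 < a) (hw : Summable fun i => wab a b (y i))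
    (R : ℝ) : {i | y i ≠ 0 ∧ |y i| ≤ R}.Finite := by
  rcases le_or_gt R 0 with hR | hR
  · refine Set.finite_empty.subset fun i hi => ?_
    exact absurd (hi.2.trans hR) (not_le.2 (abs_pos.2 hi.1))
  refine (Filter.eventually_cofinite.1 (hw.tendsto_cofinite_zero.eventually
    (gt_mem_nhds (Real.rpow_pos_of_pos hR (-1 / a))))).subset fun i hi => ?_
  simp only [Set.mem_ofPred_eq, not_lt]
  calc R ^ (-1 / a) ≤ |y i| ^ (-1 / a) :=
        Real.rpow_le_rpow_of_nonpos (abs_pos.2 hi.1) hi.2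
          (div_nonpos_of_nonpos_of_nonneg (by norm_num) ha.le)
    _ ≤ |y i| ^ (-1 / a) * (1 + |Real.log (|y i|)|) :=
        le_mul_of_one_le_right (by positivity) (by simp)
    _ ≤ wab a b (y i) := le_max_left _ _

lemma tendsto_tsum_ite_lt_atTop_zero {w : ι → ℝ} (hw : Summable w) (ℓ : ι → ℝ) :
    Tendsto (fun N : ℕ => ∑' i, if (N : ℝ) < ℓ i then w i else 0) atTop (𝓝 0) := by
  have := tendsto_tsum_of_dominated_convergence (𝓕 := atTop) (g := fun _ : ι => (0 : ℝ))
    (f := fun (N : ℕ) i => if (N : ℝ) < ℓ i then w i else 0) hw.abs (fun i => ?_)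
    (Eventually.of_forall fun N i => ?_)
  · simpa using this
  · refine tendsto_const_nhds.congr' ?_
    filter_upwards [(tendsto_natCast_atTop_atTop (R := ℝ)).eventually_ge_atTop (ℓ i)] with N hN
    simp [not_lt.2 hN]
  · split_ifs <;> simp

end Summability

section Gronwall

variable {ι : Type*}

lemma add_sum_mul_le_mul_prod_one_add (x : ι → ℝ) {c u : ι → ℝ} {A : ℝ} (Q : Finset ι)
    (hc : ∀ i, 0 ≤ c i) (hu : ∀ i, 0 ≤ u i)
    (h : ∀ i ∈ Q, u i ≤ A + ∑ j ∈ Q with x j < x i, c j * u j) :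
    A + ∑ i ∈ Q, c i * u i ≤ A * ∏ i ∈ Q, (1 + c i) := by
  classical
  induction Q using Finset.strongInduction with
  | H Q ih =>
  rcases Q.eq_empty_or_nonempty with rfl | hne
  · simp
  -- remove a jump `p` at the largest position: it lies strictly before no other jump
  obtain ⟨p, hp, hmax⟩ := Q.exists_max_image x hne
  have hfilter : ∀ i ∈ Q.erase p,
      (Q.erase p).filter (fun j => x j < x i) = Q.filter (fun j => x j < x i) := by
    intro i hi
    rw [Finset.filter_erase, Finset.erase_eq_of_notMem]
    simp only [Finset.mem_filter, not_and, not_lt]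
    exact fun _ => hmax i (Finset.mem_of_mem_erase hi)
  have hQ' := ih (Q.erase p) (Finset.erase_ssubset hp)
    (fun i hi => by rw [hfilter i hi]; exact h i (Finset.mem_of_mem_erase hi))
  have hup : u p ≤ A + ∑ i ∈ Q.erase p, c i * u i := by
    refine (h p hp).trans ((add_le_add_iff_left A).2 (Finset.sum_le_sum_of_subset_of_nonneg
      (fun j hj => ?_) fun j _ _ => mul_nonneg (hc j) (hu j)))
    rw [Finset.mem_filter] at hj
    exact Finset.mem_erase.2 ⟨fun hjp => (hjp ▸ hj.2).false, hj.1⟩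
  calc A + ∑ i ∈ Q, c i * u i = (A + ∑ i ∈ Q.erase p, c i * u i) + c p * u p := by
        rw [← Finset.add_sum_erase Q _ hp]; ring
    _ ≤ (1 + c p) * (A + ∑ i ∈ Q.erase p, c i * u i) := by
        nlinarith [mul_le_mul_of_nonneg_left hup (hc p)]
    _ ≤ (1 + c p) * (A * ∏ i ∈ Q.erase p, (1 + c i)) := by
        gcongr; linarith [hc p]
    _ = A * ∏ i ∈ Q, (1 + c i) := by rw [← Finset.mul_prod_erase Q _ hp]; ring

lemma le_mul_exp_sum_of_le_add_sum_jumps {t₀ t₁ A : ℝ} {D : ℝ → ℝ} {x c d : ι → ℝ}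
    (Q : Finset ι) (hA : 0 ≤ A) (hc : ∀ i, 0 ≤ c i) (hd₀ : ∀ i, 0 ≤ d i)
    (hD : ∀ t ∈ Ico t₀ t₁, D t ≤ A + ∑ i ∈ Q with x i ∈ Ioc t₀ t, c i * d i)
    (hd : ∀ i ∈ Q, x i ∈ Ioc t₀ t₁ → ∀ B, (∀ v ∈ Ioo t₀ (x i), D v ≤ B) → d i ≤ B) :
    ∀ t ∈ Ico t₀ t₁, D t ≤ A * Real.exp (∑ i ∈ Q, c i) := by
  intro t ht
  set P := Q.filter fun i => x i ∈ Ioc t₀ t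
  have hPQ : P ⊆ Q := Finset.filter_subset _ _
  have hP : ∀ i ∈ P, d i ≤ A + ∑ j ∈ P with x j < x i, c j * d j := by
    intro i hi
    obtain ⟨hiQ, hxi⟩ := Finset.mem_filter.1 hi
    refine hd i hiQ ⟨hxi.1, hxi.2.trans ht.2.le⟩ _ fun v hv => ?_
    refine (hD v ⟨hv.1.le, hv.2.trans_le hxi.2 |>.trans ht.2⟩).trans
      ((add_le_add_iff_left A).2 (Finset.sum_le_sum_of_subset_of_nonneg
        (fun j hj => ?_) fun j _ _ => mul_nonneg (hc j) (hd₀ j)))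
    obtain ⟨hjQ, hxj⟩ := Finset.mem_filter.1 hj
    exact Finset.mem_filter.2 ⟨Finset.mem_filter.2 ⟨hjQ, hxj.1, hxj.2.trans (hv.2.le.trans hxi.2)⟩,
      hxj.2.trans_lt hv.2⟩
  calc D t ≤ A + ∑ i ∈ P, c i * d i := hD t ht
    _ ≤ A * ∏ i ∈ P, (1 + c i) := add_sum_mul_le_mul_prod_one_add x P hc hd₀ hP
    _ ≤ A * Real.exp (∑ i ∈ P, c i) := by gcongr; exact Real.prod_one_add_le_exp_sum P hc
    _ ≤ A * Real.exp (∑ i ∈ Q, c i) := by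
        gcongr; exact fun i _ _ => hc i

end Gronwall

lemma CadlagOn.tendsto_leftLim {f : ℝ → ℝ} {t₀ t₁ x : ℝ} (hf : CadlagOn f t₀ t₁)
    (hx : x ∈ Ioc t₀ t₁) : Tendsto f (𝓝[<] x) (𝓝 (leftLim f x)) :=
  tendsto_leftLim_of_tendsto (hf.2 x hx)

lemma abs_leftLim_sub_le {f g : ℝ → ℝ} {t₀ x B : ℝ} (hf : Tendsto f (𝓝[<] x) (𝓝 (leftLim f x)))
    (hg : Tendsto g (𝓝[<] x) (𝓝 (leftLim g x))) (hx : t₀ < x)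
    (hB : ∀ v ∈ Ioo t₀ x, |f v - g v| ≤ B) : |leftLim f x - leftLim g x| ≤ B :=
  le_of_tendsto (hf.sub hg).abs (eventually_of_mem (Ioo_mem_nhdsLT hx) hB)

lemma UniformCauchySeqOn.exists_tendstoUniformlyOn {α β : Type*} [UniformSpace β]
    [CompleteSpace β] [Nonempty β] {F : ℕ → α → β} {s : Set α}
    (hF : UniformCauchySeqOn F atTop s) : ∃ f, TendstoUniformlyOn F f atTop s :=
  ⟨fun x => limUnder atTop fun n => F n x,
    hF.tendstoUniformlyOn_of_tendsto fun _ hx => (hF.cauchySeq hx).tendsto_limUnder⟩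

lemma TendstoUniformlyOn.tendsto_leftLim {F : ℕ → ℝ → ℝ} {f : ℝ → ℝ} {s : Set ℝ} {t₀ x : ℝ}
    (hf : TendstoUniformlyOn F f atTop s) (hx : t₀ < x) (hs : Ioo t₀ x ⊆ s)
    (hF : ∀ k, Tendsto (F k) (𝓝[<] x) (𝓝 (leftLim (F k) x))) :
    Tendsto (fun k => leftLim (F k) x) atTop (𝓝 (leftLim f x)) := by
  have hcauchy : CauchySeq fun k => leftLim (F k) x := by
    rw [Metric.cauchySeq_iff]
    intro ε hε
    obtain ⟨N, hN⟩ := Metric.uniformCauchySeqOn_iff.1 hf.uniformCauchySeqOn (ε / 2) (half_pos hε)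
    refine ⟨N, fun m hm n hn => ?_⟩
    rw [Real.dist_eq]
    refine (abs_leftLim_sub_le (hF m) (hF n) hx fun v hv => ?_).trans_lt (half_lt_self hε)
    simpa only [Real.dist_eq] using (hN m hm n hn v (hs hv)).le
  obtain ⟨ℓ, hℓ⟩ := cauchySeq_tendsto_of_complete hcauchy
  have hu : TendstoUniformlyOnFilter F f atTop (𝓝[<] x) :=
    (tendstoUniformlyOn_iff_tendstoUniformlyOnFilter.1 hf).mono_right
      (le_principal_iff.2 (mem_of_superset (Ioo_mem_nhdsLT hx) hs))
  rwa [leftLim_eq_of_tendsto (hu.tendsto_of_eventually_tendsto (Eventually.of_forall hF) hℓ)]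

section JumpSums

variable {a b t₀ t : ℝ} {β : ℝ → ℝ} {K : ℝ≥0} {Λ : Set (ℝ × ℝ)}

noncomputable def jumpTermTrunc (β : ℝ → ℝ) (n t₀ t : ℝ) (f : ℝ → ℝ) (p : ℝ × ℝ) : ℝ :=
  if |p.2| ≤ n ∧ p.1 ∈ Ioc t₀ t then spow p.2 (-1 / β (leftLim f p.1)) else 0

noncomputable def jumpTerm (β : ℝ → ℝ) (t₀ t : ℝ) (f : ℝ → ℝ) (p : ℝ × ℝ) : ℝ :=
  if p.1 ∈ Ioc t₀ t then spow p.2 (-1 / β (leftLim f p.1)) else 0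

lemma jumpSumTrunc_eq_tsum (n : ℝ) (f : ℝ → ℝ) :
    jumpSumTrunc β Λ n t₀ t f = ∑' p : Λ, jumpTermTrunc β n t₀ t f p := rfl

lemma abs_jumpTermTrunc_le (ha : 0 < a) (hβ : ∀ z, β z ∈ Icc a b) (n : ℝ) (f : ℝ → ℝ)
    (p : ℝ × ℝ) : |jumpTermTrunc β n t₀ t f p| ≤ wab a b p.2 := by
  unfold jumpTermTrunc
  split_ifs
  · exact abs_spow_le_wab p.2 ha (hβ _)
  · simpa using wab_nonneg a b p.2

lemma abs_jumpTermTrunc_sub_le (ha : 0 < a) (hβ : ∀ z, β z ∈ Icc a b) (hK : LipschitzWith K β)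
    {N m n : ℝ} (hm : N ≤ m) (hn : N ≤ n) (f g : ℝ → ℝ) (p : ℝ × ℝ) :
    |jumpTermTrunc β m t₀ t f p - jumpTermTrunc β n t₀ t g p| ≤
      2 * (if N < |p.2| then wab a b p.2 else 0) +
      (if |p.2| ≤ N ∧ p.1 ∈ Ioc t₀ t then
        wab a b p.2 / a ^ 2 * K * |leftLim f p.1 - leftLim g p.1| else 0) := by
  by_cases hN : |p.2| ≤ N
  · rw [if_neg (not_lt.2 hN), mul_zero, zero_add]
    by_cases hx : p.1 ∈ Ioc t₀ t
    · simp only [jumpTermTrunc, if_pos (And.intro (hN.trans hm) hx),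
        if_pos (And.intro (hN.trans hn) hx), if_pos (And.intro hN hx)]
      exact abs_spow_comp_sub_le ha hβ hK _ _ _
    · simp [jumpTermTrunc, hx]
  · rw [if_pos (not_le.1 hN), if_neg fun h => hN h.1, add_zero]
    linarith [abs_sub (jumpTermTrunc β m t₀ t f p) (jumpTermTrunc β n t₀ t g p),
      abs_jumpTermTrunc_le (t₀ := t₀) (t := t) ha hβ m f p,
      abs_jumpTermTrunc_le (t₀ := t₀) (t := t) ha hβ n g p]

lemma abs_jumpSumTrunc_sub_le (ha : 0 < a) (hβ : ∀ z, β z ∈ Icc a b) (hK : LipschitzWith K β)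
    (hw : Summable fun p : Λ => wab a b (p : ℝ × ℝ).2) {N m n : ℝ} (hm : N ≤ m) (hn : N ≤ n)
    (f g : ℝ → ℝ) {Q : Finset Λ} (hQ : ∀ p : Λ, p ∈ Q ↔ (p : ℝ × ℝ).2 ≠ 0 ∧ |(p : ℝ × ℝ).2| ≤ N) :
    |jumpSumTrunc β Λ m t₀ t f - jumpSumTrunc β Λ n t₀ t g| ≤
      2 * (∑' p : Λ, if N < |(p : ℝ × ℝ).2| then wab a b (p : ℝ × ℝ).2 else 0) +
      ∑ p ∈ Q.filter fun p : Λ => (p : ℝ × ℝ).1 ∈ Ioc t₀ t,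
        wab a b (p : ℝ × ℝ).2 / a ^ 2 * K *
          |leftLim f (p : ℝ × ℝ).1 - leftLim g (p : ℝ × ℝ).1| := by
  have hsum : ∀ k h, Summable fun p : Λ => jumpTermTrunc β k t₀ t h p := fun k h =>
    hw.of_norm_bounded fun p => abs_jumpTermTrunc_le ha hβ k h p
  have htail : Summable fun p : Λ => if N < |(p : ℝ × ℝ).2| then wab a b (p : ℝ × ℝ).2 else 0 :=
    hw.of_nonneg_of_le (fun p => by split_ifs <;> simp [wab_nonneg])
      fun p => by split_ifs <;> simp [wab_nonneg]
  -- jumps with `y = 0` carry zero weight, so only the finitely many points of `Q` contribute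
  have hfin : HasSum (fun p : Λ => if |(p : ℝ × ℝ).2| ≤ N ∧ (p : ℝ × ℝ).1 ∈ Ioc t₀ t then
        wab a b (p : ℝ × ℝ).2 / a ^ 2 * K * |leftLim f (p : ℝ × ℝ).1 - leftLim g (p : ℝ × ℝ).1|
        else 0)
      (∑ p ∈ Q.filter fun p : Λ => (p : ℝ × ℝ).1 ∈ Ioc t₀ t,
        wab a b (p : ℝ × ℝ).2 / a ^ 2 * K *
          |leftLim f (p : ℝ × ℝ).1 - leftLim g (p : ℝ × ℝ).1|) := by
    convert hasSum_sum_of_ne_finset_zero (L := SummationFilter.unconditional Λ) (s := Q)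
      fun p hp => ?_ using 1
    · rw [Finset.sum_filter]
      refine Finset.sum_congr rfl fun p hp => ?_
      simp [((hQ p).1 hp).2]
    · rw [hQ, not_and_or, not_not] at hp
      split_ifs with h
      · rcases hp with hp | hp
        · have hb : 0 < b := ha.trans_le ((hβ 0).1.trans (hβ 0).2)
          simp [hp, wab_zero ha.ne' hb.ne']
        · exact absurd h.1 hp
      · rfl
  rw [jumpSumTrunc_eq_tsum, jumpSumTrunc_eq_tsum, ← (hsum m f).tsum_sub (hsum n g)]
  exact tsum_of_norm_bounded ((htail.hasSum.mul_left 2).add hfin)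
    fun p => by rw [Real.norm_eq_abs]; exact abs_jumpTermTrunc_sub_le ha hβ hK hm hn f g p

lemma tendsto_jumpSumTrunc (ha : 0 < a) (hβ : ∀ z, β z ∈ Icc a b) (hK : LipschitzWith K β)
    (hw : Summable fun p : Λ => wab a b (p : ℝ × ℝ).2) {F : ℕ → ℝ → ℝ} {f : ℝ → ℝ}
    (hlim : ∀ x ∈ Ioc t₀ t, Tendsto (fun k => leftLim (F k) x) atTop (𝓝 (leftLim f x))) :
    Tendsto (fun k : ℕ => jumpSumTrunc β Λ k t₀ t (F k)) atTop (𝓝 (jumpSum β Λ t₀ t f)) := by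
  refine tendsto_tsum_of_dominated_convergence hw (fun p => ?_)
    (Eventually.of_forall fun k p => abs_jumpTermTrunc_le ha hβ k (F k) p)
  have hev : (fun k : ℕ => jumpTerm β t₀ t (F k) p) =ᶠ[atTop]
      fun k : ℕ => jumpTermTrunc β k t₀ t (F k) p := by
    filter_upwards [(tendsto_natCast_atTop_atTop (R := ℝ)).eventually_ge_atTop |(p : ℝ × ℝ).2|]
      with k hk
    simp [jumpTermTrunc, jumpTerm, hk]
  refine Tendsto.congr' hev ?_
  unfold jumpTerm
  split_ifs with hx
  · rw [tendsto_iff_norm_sub_tendsto_zero]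
    refine squeeze_zero (fun _ => norm_nonneg _)
      (fun k => abs_spow_comp_sub_le ha hβ hK (p : ℝ × ℝ).2 _ _) ?_
    simpa using ((tendsto_iff_norm_sub_tendsto_zero.1 (hlim _ hx)).const_mul
      (wab a b (p : ℝ × ℝ).2 / a ^ 2 * K))
  · exact tendsto_const_nhds

end JumpSums

section Truncations

variable {a b t₀ t₁ a₀ : ℝ} {β : ℝ → ℝ → ℝ} {K : ℝ≥0} {Λ : Set (ℝ × ℝ)} {F : ℕ → ℝ → ℝ}

theorem uniformCauchySeqOn_of_eq_add_jumpSumTrunc (ha : 0 < a) (hβ : ∀ t z, β t z ∈ Icc a b)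
    (hK : ∀ t, LipschitzWith K (β t)) (hw : Summable fun p : Λ => wab a b (p : ℝ × ℝ).2)
    (hcadlag : ∀ n, CadlagOn (F n) t₀ t₁)
    (hF : ∀ n : ℕ, ∀ t ∈ Ico t₀ t₁, F n t = a₀ + jumpSumTrunc (β t) Λ n t₀ t (F n)) :
    UniformCauchySeqOn F atTop (Ico t₀ t₁) := by
  set c : Λ → ℝ := fun p => wab a b (p : ℝ × ℝ).2 / a ^ 2 * K
  set tail : ℕ → ℝ := fun N =>
    ∑' p : Λ, if (N : ℝ) < |(p : ℝ × ℝ).2| then wab a b (p : ℝ × ℝ).2 else 0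
  have hc : ∀ p, 0 ≤ c p := fun p => by positivity [wab_nonneg a b (p : ℝ × ℝ).2]
  have hbound : ∀ N m n : ℕ, N ≤ m → N ≤ n → ∀ t ∈ Ico t₀ t₁,
      |F m t - F n t| ≤ 2 * tail N * Real.exp (∑' p, c p) := by
    intro N m n hm hn
    set Q := (finite_setOf_ne_zero_abs_le ha hw N).toFinset
    have hQ : ∀ p, p ∈ Q ↔ (p : ℝ × ℝ).2 ≠ 0 ∧ |(p : ℝ × ℝ).2| ≤ N := fun p =>
      Set.Finite.mem_toFinset _
    have hA : 0 ≤ 2 * tail N :=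
      mul_nonneg zero_le_two (tsum_nonneg fun p => by split_ifs <;> simp [wab_nonneg])
    refine fun t ht => (le_mul_exp_sum_of_le_add_sum_jumps (D := fun t => |F m t - F n t|)
      (x := fun p : Λ => (p : ℝ × ℝ).1)
      (d := fun p : Λ => |leftLim (F m) (p : ℝ × ℝ).1 - leftLim (F n) (p : ℝ × ℝ).1|) Q
      hA hc (fun p => abs_nonneg _) (fun t ht => ?_) (fun p _ hx B hB => ?_) t ht).trans ?_
    · rw [hF m t ht, hF n t ht, add_sub_add_left_eq_sub]
      exact abs_jumpSumTrunc_sub_le ha (hβ t) (hK t) hw (Nat.cast_le.2 hm) (Nat.cast_le.2 hn) _ _ hQ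
    · exact abs_leftLim_sub_le ((hcadlag m).tendsto_leftLim hx) ((hcadlag n).tendsto_leftLim hx)
        hx.1 hB
    · gcongr
      exact (hw.div_const _ |>.mul_right _).sum_le_tsum Q fun p _ => hc p
  have htail : Tendsto (fun N => 2 * tail N * Real.exp (∑' p, c p)) atTop (𝓝 0) := by
    simpa using ((tendsto_tsum_ite_lt_atTop_zero hw _).const_mul 2).mul_const (Real.exp (∑' p, c p))
  rw [Metric.uniformCauchySeqOn_iff]
  intro ε hε
  obtain ⟨N, hN⟩ := eventually_atTop.1 (htail.eventually (gt_mem_nhds hε))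
  refine ⟨N, fun m hm n hn t ht => ?_⟩
  rw [Real.dist_eq]
  exact (hbound N m n hm hn t ht).trans_lt (hN N le_rfl)

theorem eq_add_jumpSum_of_tendstoUniformlyOn (ha : 0 < a) (hβ : ∀ t z, β t z ∈ Icc a b)
    (hK : ∀ t, LipschitzWith K (β t)) (hw : Summable fun p : Λ => wab a b (p : ℝ × ℝ).2)
    (hcadlag : ∀ n, CadlagOn (F n) t₀ t₁)
    (hF : ∀ n : ℕ, ∀ t ∈ Ico t₀ t₁, F n t = a₀ + jumpSumTrunc (β t) Λ n t₀ t (F n))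
    {f : ℝ → ℝ} (hf : TendstoUniformlyOn F f atTop (Ico t₀ t₁)) :
    ∀ t ∈ Ico t₀ t₁, f t = a₀ + jumpSum (β t) Λ t₀ t f := by
  intro t ht
  have hlim : ∀ x ∈ Ioc t₀ t, Tendsto (fun k => leftLim (F k) x) atTop (𝓝 (leftLim f x)) :=
    fun x hx => hf.tendsto_leftLim hx.1 (fun v hv => ⟨hv.1.le, (hv.2.trans_le hx.2).trans ht.2⟩)
      fun k => (hcadlag k).tendsto_leftLim ⟨hx.1, hx.2.trans ht.2.le⟩
  refine tendsto_nhds_unique (hf.tendsto_at ht) ?_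
  exact (tendsto_const_nhds.add (tendsto_jumpSumTrunc ha (hβ t) (hK t) hw hlim)).congr
    fun k => (hF k t ht).symm

end Truncations

theorem stmt13_general (a b b' t₀ t₁ a₀ : ℝ) (ha : 0 < a) (hab : a < b) (hbb' : b < b')
    (g : ℝ → ℝ)
    (α : ℝ → ℝ → ℝ → ℝ) (hrange : ∀ t z w, α t z w ∈ Set.Ioo a b)
    (hsmooth : ∀ t w, ContDiff ℝ 1 (fun z => α t z w))
    (hbd : ∃ C, ∀ t z w, |deriv (fun z => α t z w) z| ≤ C)
    (Λ : Set (ℝ × ℝ))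
    (hΛ : Summable fun p : Λ => |(p : ℝ × ℝ).2| ^ (-1 / b'))
    (F : ℕ → ℝ → ℝ)
    (hF : ∀ n : ℕ, CadlagOn (F n) t₀ t₁ ∧
      ∀ t ∈ Set.Ico t₀ t₁, F n t = a₀ +
        ∑' p : Λ, if |(p : ℝ × ℝ).2| ≤ (n : ℝ) ∧ (p : ℝ × ℝ).1 ∈ Set.Ioc t₀ t
          then spow (p : ℝ × ℝ).2 (-1 / α t (Function.leftLim (F n) (p : ℝ × ℝ).1) (g t))
          else 0) :
    (∀ ε : ℝ, 0 < ε → ∃ N : ℕ, ∀ m n : ℕ, N ≤ m → N ≤ n →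
      (⨆ t : Set.Ico t₀ t₁, |F m (t : ℝ) - F n (t : ℝ)|) ≤ ε) ∧
    ∃ f : ℝ → ℝ, TendstoUniformlyOn F f atTop (Set.Ico t₀ t₁) ∧
      ∀ t ∈ Set.Ico t₀ t₁, f t = a₀ +
        ∑' p : Λ, if (p : ℝ × ℝ).1 ∈ Set.Ioc t₀ t
          then spow (p : ℝ × ℝ).2 (-1 / α t (Function.leftLim f (p : ℝ × ℝ).1) (g t))
          else 0 := by
  obtain ⟨C, hC⟩ := hbd
  have hβ : ∀ t z, α t z (g t) ∈ Icc a b := fun t z => Ioo_subset_Icc_self (hrange t z (g t))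
  have hK : ∀ t, LipschitzWith C.toNNReal fun z => α t z (g t) := fun t =>
    lipschitzWith_of_nnnorm_deriv_le ((hsmooth t (g t)).differentiable one_ne_zero) fun z => by
      rw [← NNReal.coe_le_coe, coe_nnnorm, Real.coe_toNNReal']
      exact (hC t z (g t)).trans (le_max_left _ _)
  have hw := summable_wab ha (ha.trans hab) (hab.trans hbb') hbb' hΛ
  have hcauchy := uniformCauchySeqOn_of_eq_add_jumpSumTrunc (β := fun t z => α t z (g t)) ha hβ hK
    hw (fun n => (hF n).1) fun n => (hF n).2
  obtain ⟨f, hf⟩ := hcauchy.exists_tendstoUniformlyOn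
  refine ⟨fun ε hε => ?_, f, hf, eq_add_jumpSum_of_tendstoUniformlyOn (β := fun t z => α t z (g t))
    ha hβ hK hw (fun n => (hF n).1) (fun n => (hF n).2) hf⟩
  obtain ⟨N, hN⟩ := Metric.uniformCauchySeqOn_iff.1 hcauchy ε hε
  refine ⟨N, fun m n hm hn => Real.iSup_le (fun t => ?_) hε.le⟩
  simpa only [Real.dist_eq] using (hN m hm n hn t t.2).le

/-- Non-autonomous case: the truncated solutions are Cauchy in supremum norm and the
limit satisfies the non-autonomous equation. -/
theorem stmt13 (a b b' t₀ t₁ a₀ : ℝ) (ha : 0 < a) (hab : a < b) (hbb' : b < b') (hb1 : b' < 1)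
    (ht : t₀ < t₁)
    (g : ℝ → ℝ) (hg : Measurable g)
    (α : ℝ → ℝ → ℝ → ℝ) (hrange : ∀ t z w, α t z w ∈ Set.Ioo a b)
    (hsmooth : ∀ t w, ContDiff ℝ 1 (fun z => α t z w))
    (hbd : ∃ C, ∀ t z w, |deriv (fun z => α t z w) z| ≤ C)
    (Λ : Set (ℝ × ℝ)) (hcount : Λ.Countable)
    (hsubΛ : Λ ⊆ Set.Ioo t₀ t₁ ×ˢ (Set.univ : Set ℝ))
    (hΛ : Summable fun p : Λ => |(p : ℝ × ℝ).2| ^ (-1 / b'))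
    (F : ℕ → ℝ → ℝ)
    (hF : ∀ n : ℕ, CadlagOn (F n) t₀ t₁ ∧
      ∀ t ∈ Set.Ico t₀ t₁, F n t = a₀ +
        ∑' p : Λ, if |(p : ℝ × ℝ).2| ≤ (n : ℝ) ∧ (p : ℝ × ℝ).1 ∈ Set.Ioc t₀ t
          then spow (p : ℝ × ℝ).2 (-1 / α t (Function.leftLim (F n) (p : ℝ × ℝ).1) (g t))
          else 0) :
    (∀ ε : ℝ, 0 < ε → ∃ N : ℕ, ∀ m n : ℕ, N ≤ m → N ≤ n →
      (⨆ t : Set.Ico t₀ t₁, |F m (t : ℝ) - F n (t : ℝ)|) ≤ ε) ∧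
    ∃ f : ℝ → ℝ, TendstoUniformlyOn F f atTop (Set.Ico t₀ t₁) ∧
      ∀ t ∈ Set.Ico t₀ t₁, f t = a₀ +
        ∑' p : Λ, if (p : ℝ × ℝ).1 ∈ Set.Ioc t₀ t
          then spow (p : ℝ × ℝ).2 (-1 / α t (Function.leftLim f (p : ℝ × ℝ).1) (g t))
          else 0 :=
  stmt13_general a b b' t₀ t₁ a₀ ha hab hbb' g α hrange hsmooth hbd Λ hΛ F hF
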